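/- arXiv:2107.09340 — 5 statements merged into one kernel-verified Lean document; each statement's English description precedes it below -/
import Mathlib

section
/- Let Ω ⊂ ℝ^d be measurable of finite positive measure, s ∈ (1,∞), and let r be the conjugate exponent (1/s + 1/r = 1). If ū ∈ L^s(Ω) satisfies |ū|^{-1}·χ_{{ū ≠ 0}} ∈ L^r(Ω), then ū is an s-SD function. -/
open MeasureTheory Real Filter Topology Set
open scoped ENNReal

/-! On each `Ωₖ ⊆ {ū ≠ 0}` we have `|ū| · |ū|⁻¹ = 1`, so Hölder's inequality gives
`λ(Ωₖ) ≤ ‖ū‖_{s,Ωₖ} · ‖|ū|⁻¹‖_{r,Ωₖ}`. The last factor tends to `0` by absolute continuity of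
the integral of the integrable function `|ū|^{-r}`, since `λ(Ωₖ) → 0`. -/

/-- The `L^s`-norm `(∫ |u|^s dμ)^(1/s)` as a real number. -/
noncomputable def Lnorm {X : Type*} [MeasurableSpace X] (μ : Measure X) (s : ℝ)
    (u : X → ℝ) : ℝ :=
  (∫ x, |u x| ^ s ∂μ) ^ (1 / s)

/-- `ubar` is an order-`s` slowly decreasing (s-SD) function: for every sequence of
measurable subsets `Ωk k ⊆ {ubar ≠ 0}` with positive measures tending to `0`,
the quotients `μ(Ωk k) / ‖ubar‖_{s,Ωk k}` tend to `0`. -/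
def IsSD {X : Type*} [MeasurableSpace X] (μ : Measure X) (s : ℝ) (ubar : X → ℝ) : Prop :=
  ∀ Ωk : ℕ → Set X, (∀ k, MeasurableSet (Ωk k)) →
    (∀ k, Ωk k ⊆ {x | ubar x ≠ 0}) → (∀ k, 0 < (μ (Ωk k)).toReal) →
    Tendsto (fun k => (μ (Ωk k)).toReal) atTop (𝓝 0) →
    Tendsto (fun k => (μ (Ωk k)).toReal / Lnorm (μ.restrict (Ωk k)) s ubar) atTop (𝓝 0)

/-- `η` belongs to the Fréchet subdifferential of `q` at `ubar` (with respect to the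
`L^s(μ)`-norm): the liminf of the difference quotients is nonnegative, stated in
ε-δ form. -/
def InFSub {X : Type*} [MeasurableSpace X] (μ : Measure X) (s : ℝ)
    (q : (X → ℝ) → ℝ) (ubar η : X → ℝ) : Prop :=
  ∀ ε > 0, ∃ δ > 0, ∀ h : X → ℝ, MemLp h (ENNReal.ofReal s) μ →
    0 < Lnorm μ s h → Lnorm μ s h ≤ δ →
    q (fun x => ubar x + h x) - q ubar - ∫ x, η x * h x ∂μ ≥ -ε * Lnorm μ s h

section Lnorm

variable {X : Type*} [MeasurableSpace X] {μ : Measure X}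

theorem Lnorm_nonneg (s : ℝ) (u : X → ℝ) : 0 ≤ Lnorm μ s u :=
  rpow_nonneg (integral_nonneg fun _ => rpow_nonneg (abs_nonneg _) _) _

theorem measureReal_le_Lnorm_mul_Lnorm {A : Set X} (hA : MeasurableSet A) {s r : ℝ}
    (hsr : s.HolderConjugate r) {f g : X → ℝ} (hf : MemLp f (ENNReal.ofReal s) (μ.restrict A))
    (hg : MemLp g (ENNReal.ofReal r) (μ.restrict A)) (hfg : ∀ x ∈ A, |f x| * |g x| = 1) :
    μ.real A ≤ Lnorm (μ.restrict A) s f * Lnorm (μ.restrict A) r g :=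
  calc μ.real A = ∫ x in A, |f x| * |g x| ∂μ := by
        rw [setIntegral_congr_fun hA hfg, setIntegral_const, smul_eq_mul, mul_one]
    _ ≤ _ := integral_mul_norm_le_Lp_mul_Lq hsr hf hg

theorem tendsto_Lnorm_restrict_nhds_zero {ι : Type*} {l : Filter ι} {r : ℝ} (hr : 0 < r)
    {g : X → ℝ} (hg : MemLp g (ENNReal.ofReal r) μ) {A : ι → Set X}
    (hA : Tendsto (μ ∘ A) l (𝓝 0)) :
    Tendsto (fun i => Lnorm (μ.restrict (A i)) r g) l (𝓝 0) := by
  have hint : Integrable (fun x => |g x| ^ r) μ := by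
    simpa [ENNReal.toReal_ofReal hr.le] using
      hg.integrable_norm_rpow (by simpa using hr) ENNReal.ofReal_ne_top
  have hrpow : ContinuousAt (fun y : ℝ => y ^ (1 / r)) 0 :=
    continuousAt_rpow_const 0 _ (Or.inr (by positivity))
  simpa [Lnorm, Function.comp_def, zero_rpow (inv_pos.mpr hr).ne'] using
    hrpow.tendsto.comp (hint.tendsto_setIntegral_nhds_zero hA)

end Lnorm

theorem isSD_of_inv_memLr_general (d : ℕ) (Ω : Set (Fin d → ℝ)) (s r : ℝ) (hs : 1 < s)
    (hr : 1 / s + 1 / r = 1)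
    (ubar : (Fin d → ℝ) → ℝ) (hubar : MemLp ubar (ENNReal.ofReal s) (volume.restrict Ω))
    (hinv : MemLp (fun x => if ubar x ≠ 0 then |ubar x|⁻¹ else 0) (ENNReal.ofReal r)
      (volume.restrict Ω)) :
    IsSD (volume.restrict Ω) s ubar := by
  intro Ωk hΩk hsub hpos htend
  have hsr : s.HolderConjugate r := holderConjugate_iff.mpr ⟨hs, by simpa [one_div] using hr⟩
  have hμ : Tendsto (volume.restrict Ω ∘ Ωk) atTop (𝓝 0) := by
    have hfinite k : volume.restrict Ω (Ωk k) ≠ ⊤ := (ENNReal.toReal_pos_iff.mp (hpos k)).2.ne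
    simpa [Function.comp_def] using
      (ENNReal.tendsto_toReal_iff hfinite ENNReal.zero_ne_top).mp (by simpa using htend)
  have hreciprocal k : ∀ x ∈ Ωk k, |ubar x| * |if ubar x ≠ 0 then |ubar x|⁻¹ else 0| = 1 :=
    fun x hx => by
      have hx0 : ubar x ≠ 0 := hsub k hx
      simp [hx0]
  refine squeeze_zero (fun k => div_nonneg ENNReal.toReal_nonneg (Lnorm_nonneg _ _))
    (fun k => div_le_of_le_mul₀ (Lnorm_nonneg _ _) (Lnorm_nonneg _ _) ?_)
    (tendsto_Lnorm_restrict_nhds_zero hsr.symm.pos hinv hμ)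
  rw [mul_comm]
  exact measureReal_le_Lnorm_mul_Lnorm (hΩk k) hsr (hubar.restrict _) (hinv.restrict _)
    (hreciprocal k)

/-- If `|ubar|⁻¹ · χ_{ubar ≠ 0} ∈ L^r(Ω)` for the conjugate exponent `r`, then `ubar` is s-SD. -/
theorem isSD_of_inv_memLr (d : ℕ) (Ω : Set (Fin d → ℝ)) (hΩ : MeasurableSet Ω)
    (h0 : 0 < volume Ω) (hfin : volume Ω < ⊤) (s r : ℝ) (hs : 1 < s)
    (hr : 1 / s + 1 / r = 1)
    (ubar : (Fin d → ℝ) → ℝ) (hubar : MemLp ubar (ENNReal.ofReal s) (volume.restrict Ω))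
    (hinv : MemLp (fun x => if ubar x ≠ 0 then |ubar x|⁻¹ else 0) (ENNReal.ofReal r)
      (volume.restrict Ω)) :
    IsSD (volume.restrict Ω) s ubar :=
  isSD_of_inv_memLr_general d Ω s r hs hr ubar hubar hinv
end

section
/- Let Ω ⊂ ℝ^d be measurable of finite positive measure, s ∈ (1,∞), with conjugate exponent r. A function ū ∈ L^s(Ω) is s-SD if and only if λ({x : 0 < |ū(x)| ≤ γ})·γ^{-r} → 0 as γ → 0⁺. -/
open MeasureTheory Real Filter Topology Set
open scoped ENNReal

/-! On a set `T` where `0 < |u| ≤ γ` one has `‖u‖_{s,T} ≤ γ μ(T)^{1/s}`, so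
`μ(T) / ‖u‖_{s,T} ≥ (μ(T) γ^{-r})^{1/r}`: level sets `{0 < |u| ≤ γ}` on which `μ γ^{-r}` stays
large violate slow decrease. Conversely, if `μ{0 < |u| ≤ γ} < δ γ^r` for small `γ`, choose `γ`
with `δ γ^r = μ(Ω_k)/2`; then half of `Ω_k` lies in `{|u| ≥ γ}`, so by Markov's inequality
`‖u‖_{s,Ω_k} ≥ γ (μ(Ω_k)/2)^{1/s}`, and the quotient is at most `2 δ^{1/r}`. -/

section

variable {X : Type*} [MeasurableSpace X] {μ : Measure X} {s r γ : ℝ} {u : X → ℝ} {T : Set X}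

theorem Real.HolderConjugate.div_mul_rpow_eq (hsr : s.HolderConjugate r) {a : ℝ} (ha : 0 < a)
    (hγ : 0 < γ) : a / (γ * a ^ (1 / s)) = (a * γ ^ (-r)) ^ (1 / r) := by
  have hsplit : a = a ^ (1 / r) * a ^ (1 / s) := by
    rw [← rpow_add ha, one_div_add_one_div hsr.symm.ne_zero hsr.ne_zero, hsr.symm.mul_eq_add,
      div_self (by linarith [hsr.symm.pos, hsr.pos] : r + s ≠ 0), rpow_one]
  rw [mul_rpow ha.le (rpow_nonneg hγ.le _), ← rpow_mul hγ.le,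
    show -r * (1 / r) = -1 by field_simp [hsr.symm.ne_zero], rpow_neg_one]
  nth_rw 1 [hsplit]
  field_simp

theorem MeasureTheory.MemLp.integrable_abs_rpow (hs : 0 < s) (hu : MemLp u (ENNReal.ofReal s) μ) :
    Integrable (fun x => |u x| ^ s) μ := by
  simpa [ENNReal.toReal_ofReal hs.le, Real.norm_eq_abs] using
    hu.integrable_norm_rpow (by simpa using hs) ENNReal.ofReal_ne_top

theorem lnorm_restrict_le_of_abs_le (hs : 0 < s) (hγ : 0 ≤ γ) (hT : μ T < ∞)
    (hu : ∀ x ∈ T, |u x| ≤ γ) : Lnorm (μ.restrict T) s u ≤ γ * μ.real T ^ (1 / s) := by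
  have hint : ∫ x in T, |u x| ^ s ∂μ ≤ γ ^ s * μ.real T := by
    refine (Real.le_norm_self _).trans (norm_setIntegral_le_of_norm_le_const hT fun x hx => ?_)
    rw [norm_of_nonneg (by positivity)]
    exact rpow_le_rpow (abs_nonneg _) (hu x hx) hs.le
  calc Lnorm (μ.restrict T) s u ≤ (γ ^ s * μ.real T) ^ (1 / s) :=
        rpow_le_rpow (integral_nonneg fun _ => by positivity) hint (by positivity)
    _ = γ * μ.real T ^ (1 / s) := by
        rw [mul_rpow (by positivity) measureReal_nonneg, ← rpow_mul hγ, mul_one_div_cancel hs.ne',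
          rpow_one]

theorem mul_rpow_le_lnorm_restrict (hs : 0 < s) (hγ : 0 ≤ γ) (hT : MeasurableSet T)
    (hu : IntegrableOn (fun x => |u x| ^ s) T μ) :
    γ * μ.real (T ∩ {x | γ ≤ |u x|}) ^ (1 / s) ≤ Lnorm (μ.restrict T) s u := by
  have hmarkov := mul_meas_ge_le_integral_of_nonneg
    (Eventually.of_forall fun x => by positivity) hu (γ ^ s)
  have hlevel : {x | γ ^ s ≤ |u x| ^ s} = {x | γ ≤ |u x|} := by
    ext x
    exact rpow_le_rpow_iff hγ (abs_nonneg _) hs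
  rw [hlevel, measureReal_restrict_apply' hT, inter_comm] at hmarkov
  calc γ * μ.real (T ∩ {x | γ ≤ |u x|}) ^ (1 / s)
      = (γ ^ s * μ.real (T ∩ {x | γ ≤ |u x|})) ^ (1 / s) := by
        rw [mul_rpow (by positivity) measureReal_nonneg, ← rpow_mul hγ, mul_one_div_cancel hs.ne',
          rpow_one]
    _ ≤ Lnorm (μ.restrict T) s u := rpow_le_rpow (by positivity) hmarkov (by positivity)

theorem lnorm_restrict_pos (hTu : T ⊆ {x | u x ≠ 0}) (hμT : 0 < μ T)
    (hu : IntegrableOn (fun x => |u x| ^ s) T μ) : 0 < Lnorm (μ.restrict T) s u := by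
  refine rpow_pos_of_pos ?_ _
  rw [setIntegral_pos_iff_support_of_nonneg_ae (Eventually.of_forall fun x => by positivity) hu,
    inter_eq_self_of_subset_right fun x hx => ?_]
  · exact hμT
  · have : u x ≠ 0 := hTu hx
    simp only [Function.mem_support]
    positivity

theorem nullMeasurableSet_sublevelSet (hu : AEMeasurable u μ) (γ : ℝ) :
    NullMeasurableSet {x | 0 < |u x| ∧ |u x| ≤ γ} μ :=
  (continuous_abs.measurable.comp_aemeasurable hu).nullMeasurable measurableSet_Ioc

theorem tendsto_measureReal_sublevelSet [IsFiniteMeasure μ] (hu : AEMeasurable u μ) :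
    Tendsto (fun γ => μ.real {x | 0 < |u x| ∧ |u x| ≤ γ}) (𝓝[>] 0) (𝓝 0) := by
  have hempty : ⋂ γ > (0 : ℝ), {x | 0 < |u x| ∧ |u x| ≤ γ} = ∅ := by
    refine eq_empty_of_forall_notMem fun x hx => ?_
    simp only [mem_iInter, mem_ofPred_eq] at hx
    have hpos := (hx 1 one_pos).1
    linarith [(hx _ (half_pos hpos)).2]
  have h := tendsto_measure_biInter_gt (fun γ _ => nullMeasurableSet_sublevelSet hu γ)
    (fun γ γ' _ hγγ' x hx => ⟨hx.1, hx.2.trans hγγ'⟩) ⟨1, one_pos, measure_ne_top μ _⟩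
  rw [hempty, measure_empty] at h
  exact (ENNReal.tendsto_toReal ENNReal.zero_ne_top).comp h

theorem rpow_le_measureReal_div_lnorm (hsr : s.HolderConjugate r) (hγ : 0 < γ)
    (hTu : T ⊆ {x | 0 < |u x| ∧ |u x| ≤ γ}) (hμT : 0 < μ.real T)
    (hu : IntegrableOn (fun x => |u x| ^ s) T μ) :
    (μ.real T * γ ^ (-r)) ^ (1 / r) ≤ μ.real T / Lnorm (μ.restrict T) s u := by
  obtain ⟨hpos, hfin⟩ := ENNReal.toReal_pos_iff.mp hμT
  rw [← hsr.div_mul_rpow_eq hμT hγ]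
  exact div_le_div_of_nonneg_left hμT.le
    (lnorm_restrict_pos (fun x hx => abs_pos.mp (hTu hx).1) hpos hu)
    (lnorm_restrict_le_of_abs_le hsr.pos hγ.le hfin fun x hx => (hTu hx).2)

theorem measureReal_div_lnorm_le [IsFiniteMeasure μ] (hsr : s.HolderConjugate r) (hγ : 0 < γ)
    (hT : MeasurableSet T) (hTu : T ⊆ {x | u x ≠ 0}) (hμT : 0 < μ.real T)
    (hE : μ.real {x | 0 < |u x| ∧ |u x| ≤ γ} ≤ μ.real T / 2)
    (hu : IntegrableOn (fun x => |u x| ^ s) T μ) :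
    μ.real T / Lnorm (μ.restrict T) s u ≤ 2 * (μ.real T / 2 * γ ^ (-r)) ^ (1 / r) := by
  set a := μ.real T / 2 with ha_def
  have ha : 0 < a := half_pos hμT
  have hlarge : a ≤ μ.real (T ∩ {x | γ ≤ |u x|}) := by
    have hcover : T ⊆ (T ∩ {x | γ ≤ |u x|}) ∪ {x | 0 < |u x| ∧ |u x| ≤ γ} := fun x hx => by
      by_cases h : γ ≤ |u x|
      · exact Or.inl ⟨hx, h⟩
      · exact Or.inr ⟨abs_pos.mpr (hTu hx), (not_le.mp h).le⟩
    linarith [ha_def, measureReal_mono (μ := μ) hcover,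
      measureReal_union_le (μ := μ) (T ∩ {x | γ ≤ |u x|}) {x | 0 < |u x| ∧ |u x| ≤ γ}]
  have hL : γ * a ^ (1 / s) ≤ Lnorm (μ.restrict T) s u :=
    (mul_le_mul_of_nonneg_left (rpow_le_rpow ha.le hlarge hsr.one_div_nonneg) hγ.le).trans
      (mul_rpow_le_lnorm_restrict hsr.pos hγ.le hT hu)
  calc μ.real T / Lnorm (μ.restrict T) s u ≤ μ.real T / (γ * a ^ (1 / s)) :=
        div_le_div_of_nonneg_left hμT.le (by positivity) hL
    _ = 2 * (a / (γ * a ^ (1 / s))) := by ring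
    _ = 2 * (a * γ ^ (-r)) ^ (1 / r) := by rw [hsr.div_mul_rpow_eq ha hγ]

theorem IsSD.tendsto_measureReal_sublevelSet_mul_rpow [IsFiniteMeasure μ]
    (hsr : s.HolderConjugate r) (hu : MemLp u (ENNReal.ofReal s) μ) (hSD : IsSD μ s u) :
    Tendsto (fun γ => μ.real {x | 0 < |u x| ∧ |u x| ≤ γ} * γ ^ (-r)) (𝓝[>] 0) (𝓝 0) := by
  refine tendsto_order.2 ⟨fun a ha => ?_, fun ε hε => ?_⟩
  · filter_upwards [self_mem_nhdsWithin] with γ (hγ : 0 < γ)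
    exact ha.trans_le (by positivity)
  by_contra hfreq
  obtain ⟨γ, hγlim, hγ⟩ := exists_seq_forall_of_frequently
    ((not_eventually.mp hfreq).and_eventually self_mem_nhdsWithin)
  -- `u` is only a.e.-measurable: replace each level set by a measurable subset of full measure.
  have hum := hu.aestronglyMeasurable.aemeasurable
  choose T hTsub hTmeas hTae using fun k =>
    (nullMeasurableSet_sublevelSet hum (γ k)).exists_measurable_subset_ae_eq
  have hμT : ∀ k, μ.real (T k) = μ.real {x | 0 < |u x| ∧ |u x| ≤ γ k} := fun k =>
    measureReal_congr (hTae k)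
  have hεT : ∀ k, ε ≤ μ.real (T k) * γ k ^ (-r) := fun k => by
    rw [hμT k]
    exact not_lt.mp (hγ k).1
  have hpos : ∀ k, 0 < μ.real (T k) := fun k =>
    pos_of_mul_pos_left (hε.trans_le (hεT k)) (rpow_nonneg (hγ k).2.le _)
  have hT0 : Tendsto (fun k => μ.real (T k)) atTop (𝓝 0) := by
    refine (tendsto_congr hμT).2 ?_
    exact (tendsto_measureReal_sublevelSet hum).comp hγlim
  have hratio := hSD T hTmeas (fun k => (hTsub k).trans fun x hx => abs_pos.mp hx.1) hpos hT0
  obtain ⟨k, hk⟩ := (hratio.eventually (gt_mem_nhds (rpow_pos_of_pos hε (1 / r)))).exists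
  exact hk.not_ge <| (rpow_le_rpow hε.le (hεT k) hsr.symm.one_div_nonneg).trans <|
    rpow_le_measureReal_div_lnorm hsr (hγ k).2 (hTsub k) (hpos k)
      (hu.integrable_abs_rpow hsr.pos).integrableOn

theorem isSD_of_tendsto_measureReal_sublevelSet_mul_rpow [IsFiniteMeasure μ]
    (hsr : s.HolderConjugate r) (hu : Integrable (fun x => |u x| ^ s) μ)
    (h : Tendsto (fun γ => μ.real {x | 0 < |u x| ∧ |u x| ≤ γ} * γ ^ (-r)) (𝓝[>] 0) (𝓝 0)) :
    IsSD μ s u := by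
  intro Ωk hmeas hsub hpos htend
  refine tendsto_order.2 ⟨fun a ha => Eventually.of_forall fun k => ha.trans_le ?_, fun ε hε => ?_⟩
  · exact div_nonneg (hpos k).le (rpow_nonneg (integral_nonneg fun _ => by positivity) _)
  set δ := (ε / 4) ^ r
  have hδ : 0 < δ := by positivity
  set γ := fun k => (μ.real (Ωk k) / 2 / δ) ^ (1 / r)
  have hγpos : ∀ k, 0 < γ k := fun k => by have := hpos k; positivity
  have hγ : Tendsto γ atTop (𝓝[>] 0) := by
    refine tendsto_nhdsWithin_iff.2 ⟨?_, Eventually.of_forall hγpos⟩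
    have := ((htend.div_const 2).div_const δ).rpow_const (Or.inr hsr.symm.one_div_nonneg)
    rwa [zero_div, zero_div, zero_rpow hsr.symm.one_div_ne_zero] at this
  have hscale : ∀ k, μ.real (Ωk k) / 2 * γ k ^ (-r) = δ := fun k => by
    have : μ.real (Ωk k) ≠ 0 := (hpos k).ne'
    rw [← rpow_mul (by positivity), show 1 / r * -r = -1 by field_simp [hsr.symm.ne_zero],
      rpow_neg_one]
    field_simp
  filter_upwards [hγ.eventually (h.eventually (gt_mem_nhds hδ))] with k hk
  have hE : μ.real {x | 0 < |u x| ∧ |u x| ≤ γ k} ≤ μ.real (Ωk k) / 2 :=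
    (lt_of_mul_lt_mul_right (hk.trans_eq (hscale k).symm) (rpow_nonneg (hγpos k).le _)).le
  calc μ.real (Ωk k) / Lnorm (μ.restrict (Ωk k)) s u
      ≤ 2 * (μ.real (Ωk k) / 2 * γ k ^ (-r)) ^ (1 / r) :=
        measureReal_div_lnorm_le hsr (hγpos k) (hmeas k) (hsub k) (hpos k) hE hu.integrableOn
    _ = ε / 2 := by
        rw [hscale k, one_div, rpow_rpow_inv (by positivity) hsr.symm.ne_zero]
        ring
    _ < ε := half_lt_self hε

theorem isSD_iff_tendsto_measureReal_sublevelSet_mul_rpow [IsFiniteMeasure μ]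
    (hsr : s.HolderConjugate r) (hu : MemLp u (ENNReal.ofReal s) μ) :
    IsSD μ s u ↔
      Tendsto (fun γ => μ.real {x | 0 < |u x| ∧ |u x| ≤ γ} * γ ^ (-r)) (𝓝[>] 0) (𝓝 0) :=
  ⟨fun h => h.tendsto_measureReal_sublevelSet_mul_rpow hsr hu,
    isSD_of_tendsto_measureReal_sublevelSet_mul_rpow hsr (hu.integrable_abs_rpow hsr.pos)⟩

end

theorem isSD_iff_measure_small_general (d : ℕ) (Ω : Set (Fin d → ℝ))
    (hfin : volume Ω < ⊤) (s r : ℝ) (hs : 1 < s)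
    (hr : 1 / s + 1 / r = 1)
    (ubar : (Fin d → ℝ) → ℝ) (hubar : MemLp ubar (ENNReal.ofReal s) (volume.restrict Ω)) :
    IsSD (volume.restrict Ω) s ubar ↔
      Tendsto (fun γ : ℝ =>
          ((volume.restrict Ω) {x | 0 < |ubar x| ∧ |ubar x| ≤ γ}).toReal * γ ^ (-r))
        (𝓝[>] (0:ℝ)) (𝓝 0) := by
  have : IsFiniteMeasure (volume.restrict Ω) := isFiniteMeasure_restrict.mpr hfin.ne
  exact isSD_iff_tendsto_measureReal_sublevelSet_mul_rpow
    (Real.holderConjugate_iff.mpr ⟨hs, by simpa only [one_div] using hr⟩) hubar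

/-- `ubar ∈ L^s(Ω)` is s-SD iff `λ({0 < |ubar| ≤ γ}) · γ^{-r} → 0` as `γ → 0⁺`. -/
theorem isSD_iff_measure_small (d : ℕ) (Ω : Set (Fin d → ℝ)) (hΩ : MeasurableSet Ω)
    (h0 : 0 < volume Ω) (hfin : volume Ω < ⊤) (s r : ℝ) (hs : 1 < s)
    (hr : 1 / s + 1 / r = 1)
    (ubar : (Fin d → ℝ) → ℝ) (hubar : MemLp ubar (ENNReal.ofReal s) (volume.restrict Ω)) :
    IsSD (volume.restrict Ω) s ubar ↔
      Tendsto (fun γ : ℝ =>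
          ((volume.restrict Ω) {x | 0 < |ubar x| ∧ |ubar x| ≤ γ}).toReal * γ ^ (-r))
        (𝓝[>] (0:ℝ)) (𝓝 0) :=
  isSD_iff_measure_small_general d Ω hfin s r hs hr ubar hubar
end

section
/- Let Ω ⊂ ℝ^d be measurable with finite positive measure, s ∈ (1,∞) with conjugate exponent r, and ū ∈ L^s(Ω). If |ū|^{-1}·χ_{{ū≠0}} ∈ L^r(Ω), then λ({x : 0 < |ū(x)| ≤ γ})·γ^{-r} → 0 as γ → 0⁺. -/
/-!
On `{0 < |ū| ≤ γ}` the function `f = |ū|⁻ʳ` is at least `γ⁻ʳ`, so Markov's inequality on the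
superlevel set `{f ≥ γ⁻ʳ}` bounds `γ⁻ʳ · λ{0 < |ū| ≤ γ}` by `∫_{f ≥ γ⁻ʳ} f`. Since `f` is
integrable, these superlevel sets have measure tending to `0` (Markov again), and absolute
continuity of the integral sends `∫_{f ≥ γ⁻ʳ} f` to `0` as `γ → 0⁺`.
-/

open MeasureTheory Real Filter Topology Set
open scoped ENNReal

theorem rpow_neg_le_inv_abs_rpow {a γ r : ℝ} (hr : 0 ≤ r) (ha : 0 < |a|) (haγ : |a| ≤ γ) :
    γ ^ (-r) ≤ |a|⁻¹ ^ r := by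
  rw [Real.rpow_neg (ha.le.trans haγ), ← Real.inv_rpow (ha.le.trans haγ)]
  exact Real.rpow_le_rpow (inv_nonneg.mpr (ha.le.trans haγ)) (inv_anti₀ ha haγ) hr

theorem setOf_abs_le_subset_setOf_le_enorm_inv_rpow {X : Type*} {u : X → ℝ} {r γ : ℝ}
    (hr : 0 ≤ r) :
    {x | 0 < |u x| ∧ |u x| ≤ γ} ⊆ {x | ENNReal.ofReal (γ ^ (-r)) ≤ ‖|u x|⁻¹‖ₑ ^ r} := by
  rintro x ⟨hpos, hle⟩
  rw [Set.mem_ofPred_eq, Real.enorm_eq_ofReal (inv_nonneg.mpr (abs_nonneg _)),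
    ENNReal.ofReal_rpow_of_nonneg (inv_nonneg.mpr (abs_nonneg _)) hr]
  exact ENNReal.ofReal_le_ofReal (rpow_neg_le_inv_abs_rpow hr hpos hle)

section

variable {X : Type*} [MeasurableSpace X] {μ : Measure X}

theorem tendsto_measure_setOf_le_atTop {f : X → ℝ≥0∞} (hf : AEMeasurable f μ)
    (hint : ∫⁻ x, f x ∂μ ≠ ∞) :
    Tendsto (fun t : ℝ => μ {x | ENNReal.ofReal t ≤ f x}) atTop (𝓝 0) := by
  have hdiv : Tendsto (fun t : ℝ => (∫⁻ x, f x ∂μ) / ENNReal.ofReal t) atTop (𝓝 0) := by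
    simpa using ENNReal.Tendsto.const_div ENNReal.tendsto_ofReal_atTop (Or.inr hint)
  refine tendsto_of_tendsto_of_tendsto_of_le_of_le' tendsto_const_nhds hdiv
    (Eventually.of_forall fun _ => zero_le) ?_
  filter_upwards [eventually_gt_atTop 0] with t ht
  exact meas_ge_le_lintegral_div hf (by simpa using ht) ENNReal.ofReal_ne_top

theorem tendsto_mul_measure_setOf_le_atTop {f : X → ℝ≥0∞} (hf : AEMeasurable f μ)
    (hint : ∫⁻ x, f x ∂μ ≠ ∞) :
    Tendsto (fun t : ℝ => ENNReal.ofReal t * μ {x | ENNReal.ofReal t ≤ f x}) atTop (𝓝 0) := by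
  refine tendsto_of_tendsto_of_tendsto_of_le_of_le tendsto_const_nhds
    (tendsto_setLIntegral_zero hint (tendsto_measure_setOf_le_atTop hf hint))
    (fun _ => zero_le) fun t => ?_
  have h := mul_meas_ge_le_lintegral₀ (hf.restrict (s := {x | ENNReal.ofReal t ≤ f x}))
    (ENNReal.ofReal t)
  rwa [Measure.restrict_apply_self] at h

theorem tendsto_measure_abs_le_mul_rpow_neg {u : X → ℝ} {r : ℝ} (hr : 0 < r)
    (hinv : MemLp (fun x => |u x|⁻¹) (ENNReal.ofReal r) μ) :
    Tendsto (fun γ : ℝ => (μ {x | 0 < |u x| ∧ |u x| ≤ γ}).toReal * γ ^ (-r))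
      (𝓝[>] 0) (𝓝 0) := by
  have hf : AEMeasurable (fun x => ‖|u x|⁻¹‖ₑ ^ r) μ := hinv.1.enorm.pow_const r
  have hint : ∫⁻ x, ‖|u x|⁻¹‖ₑ ^ r ∂μ ≠ ∞ := by
    simpa [ENNReal.toReal_ofReal hr.le] using
      (lintegral_rpow_enorm_lt_top_of_eLpNorm_lt_top (by simpa using hr) ENNReal.ofReal_ne_top
        hinv.2).ne
  have hlevel := (tendsto_mul_measure_setOf_le_atTop hf hint).comp
    (tendsto_rpow_neg_nhdsGT_zero (neg_neg_of_pos hr))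
  have hsmall : Tendsto (fun γ : ℝ => ENNReal.ofReal (γ ^ (-r)) * μ {x | 0 < |u x| ∧ |u x| ≤ γ})
      (𝓝[>] 0) (𝓝 0) :=
    tendsto_of_tendsto_of_tendsto_of_le_of_le tendsto_const_nhds hlevel (fun _ => zero_le)
      fun _ => mul_le_mul_right
        (measure_mono (setOf_abs_le_subset_setOf_le_enorm_inv_rpow hr.le)) _
  have hreal := (ENNReal.tendsto_toReal ENNReal.zero_ne_top).comp hsmall
  rw [ENNReal.toReal_zero] at hreal
  refine hreal.congr' ?_
  filter_upwards [self_mem_nhdsWithin] with γ (hγ : 0 < γ)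
  simp [ENNReal.toReal_mul, ENNReal.toReal_ofReal (rpow_nonneg hγ.le _), mul_comm]

end

theorem measure_small_of_inv_memLr_general (d : ℕ) (Ω : Set (Fin d → ℝ)) (s r : ℝ) (hs : 1 < s)
    (hr : 1 / s + 1 / r = 1)
    (ubar : (Fin d → ℝ) → ℝ)
    (hinv : MemLp (fun x => if ubar x ≠ 0 then |ubar x|⁻¹ else 0) (ENNReal.ofReal r)
      (volume.restrict Ω)) :
    Tendsto (fun γ : ℝ =>
        ((volume.restrict Ω) {x | 0 < |ubar x| ∧ |ubar x| ≤ γ}).toReal * γ ^ (-r))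
      (𝓝[>] (0:ℝ)) (𝓝 0) := by
  have hr0 : 0 < r :=
    (Real.holderConjugate_iff.mpr ⟨hs, by simpa only [one_div] using hr⟩).symm.pos
  -- since `|0|⁻¹ = 0` in Lean, the cut-off to `{ubar ≠ 0}` changes nothing
  have hinv' : MemLp (fun x => |ubar x|⁻¹) (ENNReal.ofReal r) (volume.restrict Ω) := by
    convert hinv using 2 with x
    split_ifs <;> simp_all
  exact tendsto_measure_abs_le_mul_rpow_neg hr0 hinv'

/-- If `|ubar|⁻¹ · χ_{ubar ≠ 0} ∈ L^r(Ω)`, then `λ({0 < |ubar| ≤ γ}) · γ^{-r} → 0` as `γ → 0⁺`. -/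
theorem measure_small_of_inv_memLr (d : ℕ) (Ω : Set (Fin d → ℝ)) (hΩ : MeasurableSet Ω)
    (h0 : 0 < volume Ω) (hfin : volume Ω < ⊤) (s r : ℝ) (hs : 1 < s)
    (hr : 1 / s + 1 / r = 1)
    (ubar : (Fin d → ℝ) → ℝ) (hubar : MemLp ubar (ENNReal.ofReal s) (volume.restrict Ω))
    (hinv : MemLp (fun x => if ubar x ≠ 0 then |ubar x|⁻¹ else 0) (ENNReal.ofReal r)
      (volume.restrict Ω)) :
    Tendsto (fun γ : ℝ =>
        ((volume.restrict Ω) {x | 0 < |ubar x| ∧ |ubar x| ≤ γ}).toReal * γ ^ (-r))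
      (𝓝[>] (0:ℝ)) (𝓝 0) :=
  measure_small_of_inv_memLr_general d Ω s r hs hr ubar hinv
end

section
/- Let Ω ⊂ ℝ^d be measurable with finite positive measure, s ∈ [1,∞) with conjugate exponent r, and q_{s,0}(u) = λ({u ≠ 0}) on L^s(Ω). For any ū ∈ L^s(Ω), every element η of the Fréchet subdifferential of q_{s,0} at ū vanishes almost everywhere on {ū ≠ 0}. -/
/-! Perturbing `ubar` by `t • g` with `|t| < 1` and `|g| ≤ |ubar|` does not change the set
`{ubar ≠ 0}`, so `q_{s,0}` is constant along `g` and the Fréchet inequality forces `∫ η g ≤ 0`.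
For `g = sgn η · min(|ubar|, 1)` the integrand `η g` is nonnegative and strictly positive on
`{ubar ≠ 0, η ≠ 0}`, so that set is null. -/

open MeasureTheory Real Filter Topology Set
open scoped ENNReal

theorem Real.measurable_sign : Measurable Real.sign :=
  Measurable.ite measurableSet_Iio measurable_const
    (Measurable.ite measurableSet_Ioi measurable_const measurable_const)

theorem Real.abs_sign_mul_le (a b : ℝ) : |Real.sign a * b| ≤ |b| := by
  rcases Real.sign_apply_eq a with h | h | h <;> simp [h]

theorem Real.mul_sign_mul_nonneg (a : ℝ) {b : ℝ} (hb : 0 ≤ b) : 0 ≤ a * (Real.sign a * b) := by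
  rw [← mul_assoc, mul_comm a]
  exact mul_nonneg (Real.sign_mul_nonneg a) hb

theorem Real.mul_sign_mul_pos {a b : ℝ} (ha : a ≠ 0) (hb : 0 < b) : 0 < a * (Real.sign a * b) := by
  rw [← mul_assoc, mul_comm a]
  exact mul_pos (Real.sign_mul_pos_of_ne_zero a ha) hb

theorem setOf_add_mul_ne_zero {X : Type*} {u g : X → ℝ} (hg : ∀ x, |g x| ≤ |u x|) {t : ℝ}
    (ht : |t| < 1) : {x | u x + t * g x ≠ 0} = {x | u x ≠ 0} := by
  ext x
  by_cases hu : u x = 0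
  · have hgx : g x = 0 := abs_nonpos_iff.1 (by simpa [hu] using hg x)
    simp [hu, hgx]
  · have hlt : |t * g x| < |u x| :=
      calc |t * g x| = |t| * |g x| := abs_mul t (g x)
        _ ≤ |t| * |u x| := mul_le_mul_of_nonneg_left (hg x) (abs_nonneg t)
        _ < |u x| := mul_lt_of_lt_one_left (abs_pos.2 hu) ht
    refine ⟨fun _ => hu, fun _ hsum => ?_⟩
    rw [show t * g x = -u x by linarith, abs_neg] at hlt
    exact hlt.false

section Lnorm

variable {X : Type*} [MeasurableSpace X] {μ : Measure X} {s : ℝ}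

theorem Lnorm_const_mul (hs : 0 < s) (t : ℝ) (g : X → ℝ) :
    Lnorm μ s (fun x => t * g x) = |t| * Lnorm μ s g := by
  have hpow : ∀ x, |t * g x| ^ s = |t| ^ s * |g x| ^ s := fun x => by
    rw [abs_mul, Real.mul_rpow (abs_nonneg t) (abs_nonneg (g x))]
  have hint : 0 ≤ ∫ x, |g x| ^ s ∂μ := integral_nonneg fun x => by positivity
  simp only [Lnorm, hpow, integral_const_mul]
  rw [Real.mul_rpow (by positivity) hint, ← Real.rpow_mul (abs_nonneg t),
    mul_one_div_cancel hs.ne', Real.rpow_one]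

theorem Lnorm_pos (hs : 0 < s) {g : X → ℝ} (hg : MemLp g (ENNReal.ofReal s) μ)
    (hg0 : ¬ g =ᵐ[μ] 0) : 0 < Lnorm μ s g := by
  have hp : ENNReal.ofReal s ≠ 0 := by simpa using hs
  have hnorm : eLpNorm g (ENNReal.ofReal s) μ = ENNReal.ofReal (Lnorm μ s g) := by
    rw [hg.eLpNorm_eq_integral_rpow_norm hp ENNReal.ofReal_ne_top, ENNReal.toReal_ofReal hs.le]
    simp [Lnorm, Real.norm_eq_abs]
  have hne : eLpNorm g (ENNReal.ofReal s) μ ≠ 0 :=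
    fun h => hg0 ((eLpNorm_eq_zero_iff hg.1 hp).1 h)
  rwa [hnorm, ne_eq, ENNReal.ofReal_eq_zero, not_le] at hne

end Lnorm

/-- The scale `t` cancels from the Fréchet inequality for the perturbations `t • g`, leaving
`∫ η g ≤ ε ‖g‖_s` for every `ε > 0`. -/
theorem InFSub.integral_mul_nonpos_of_constant_along {X : Type*} [MeasurableSpace X]
    {μ : Measure X} {s : ℝ} {q : (X → ℝ) → ℝ} {ubar η g : X → ℝ}
    (hsub : InFSub μ s q ubar η) (hs : 0 < s) (hg : MemLp g (ENNReal.ofReal s) μ)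
    (hq : ∀ t ∈ Ioo (0 : ℝ) 1, q (fun x => ubar x + t * g x) = q ubar) :
    ∫ x, η x * g x ∂μ ≤ 0 := by
  by_cases hg0 : g =ᵐ[μ] 0
  · exact (integral_eq_zero_of_ae (by filter_upwards [hg0] with x hx; simp [hx])).le
  set L := Lnorm μ s g
  have hL : 0 < L := Lnorm_pos hs hg hg0
  have key : ∀ ε > 0, ∫ x, η x * g x ∂μ ≤ ε * L := by
    intro ε hε
    obtain ⟨δ, hδ, hδh⟩ := hsub ε hε
    set t := min (1 / 2) (δ / L)
    have ht : 0 < t := lt_min (by norm_num) (div_pos hδ hL)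
    have ht1 : t < 1 := (min_le_left _ _).trans_lt (by norm_num)
    have hLt : Lnorm μ s (fun x => t * g x) = t * L := by
      rw [Lnorm_const_mul hs, abs_of_pos ht]
    have hineq := hδh (fun x => t * g x) (hg.const_mul t) (by rw [hLt]; positivity)
      (by rw [hLt, ← le_div_iff₀ hL]; exact min_le_right _ _)
    have hηh : ∫ x, η x * (t * g x) ∂μ = t * ∫ x, η x * g x ∂μ := by
      simp only [mul_left_comm (η _) t, integral_const_mul]
    rw [hq t ⟨ht, ht1⟩, hηh, hLt] at hineq
    nlinarith
  refine le_of_forall_pos_le_add fun ε hε => ?_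
  simpa [hL.ne'] using key (ε / L) (div_pos hε hL)

theorem fsub_qs0_vanishes_general (d : ℕ) (Ω : Set (Fin d → ℝ))
    (hfin : volume Ω < ⊤) (s : ℝ) (hs : 1 ≤ s) (r : ℝ≥0∞)
    (hr : (ENNReal.ofReal s)⁻¹ + r⁻¹ = 1)
    (ubar η : (Fin d → ℝ) → ℝ)
    (hubar : MemLp ubar (ENNReal.ofReal s) (volume.restrict Ω))
    (hη : MemLp η r (volume.restrict Ω))
    (hsub : InFSub (volume.restrict Ω) s
      (fun u => ((volume.restrict Ω) {x | u x ≠ 0}).toReal) ubar η) :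
    ∀ᵐ x ∂(volume.restrict Ω), ubar x ≠ 0 → η x = 0 := by
  set μ := volume.restrict Ω
  have : IsFiniteMeasure μ := ⟨by simpa [μ] using hfin⟩
  have hr1 : 1 ≤ r := ENNReal.inv_le_one.1 (hr ▸ le_add_self)
  set g := fun x => Real.sign (η x) * min |ubar x| 1
  have hg_le : ∀ x, |g x| ≤ |ubar x| ∧ |g x| ≤ 1 := fun x =>
    have h := (Real.abs_sign_mul_le (η x) (min |ubar x| 1)).trans_eq (abs_of_nonneg (by positivity))
    ⟨h.trans (min_le_left _ _), h.trans (min_le_right _ _)⟩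
  have hgm : AEStronglyMeasurable g μ :=
    ((Real.measurable_sign.comp_aemeasurable hη.1.aemeasurable).mul
      (hubar.1.aemeasurable.abs.min aemeasurable_const)).aestronglyMeasurable
  have hηg_nonneg : 0 ≤ fun x => η x * g x := fun x => Real.mul_sign_mul_nonneg _ (by positivity)
  have hηg_int : Integrable (fun x => η x * g x) μ :=
    (hη.integrable hr1).mul_bdd hgm (ae_of_all _ fun x => (hg_le x).2)
  have hle : ∫ x, η x * g x ∂μ ≤ 0 :=
    hsub.integral_mul_nonpos_of_constant_along (by linarith)
      (MemLp.of_bound hgm 1 (ae_of_all _ fun x => (hg_le x).2)) fun t ht => by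
        rw [setOf_add_mul_ne_zero (fun x => (hg_le x).1) ((abs_of_pos ht.1).trans_lt ht.2)]
  have hzero : (fun x => η x * g x) =ᵐ[μ] 0 :=
    (integral_eq_zero_iff_of_nonneg hηg_nonneg hηg_int).1
      (le_antisymm hle (integral_nonneg hηg_nonneg))
  filter_upwards [hzero] with x hx hux
  by_contra hηx
  exact (Real.mul_sign_mul_pos hηx (lt_min (abs_pos.2 hux) one_pos)).ne' hx

/-- Every element of the Fréchet subdifferential of `q_{s,0}(u) = λ({u ≠ 0})` at `ubar`
vanishes almost everywhere on `{ubar ≠ 0}`. Here `r` is the conjugate exponent of `s`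
(possibly `∞` when `s = 1`). -/
theorem fsub_qs0_vanishes (d : ℕ) (Ω : Set (Fin d → ℝ)) (hΩ : MeasurableSet Ω)
    (h0 : 0 < volume Ω) (hfin : volume Ω < ⊤) (s : ℝ) (hs : 1 ≤ s) (r : ℝ≥0∞)
    (hr : (ENNReal.ofReal s)⁻¹ + r⁻¹ = 1)
    (ubar η : (Fin d → ℝ) → ℝ)
    (hubar : MemLp ubar (ENNReal.ofReal s) (volume.restrict Ω))
    (hη : MemLp η r (volume.restrict Ω))
    (hsub : InFSub (volume.restrict Ω) s
      (fun u => ((volume.restrict Ω) {x | u x ≠ 0}).toReal) ubar η) :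
    ∀ᵐ x ∂(volume.restrict Ω), ubar x ≠ 0 → η x = 0 :=
  fsub_qs0_vanishes_general d Ω hfin s hs r hr ubar η hubar hη hsub
end

section
/- Let Ω ⊂ ℝ^d be measurable with finite positive measure, s ∈ [1,∞) with conjugate exponent r, p ∈ (0,1), and q_{s,p}(u) = ∫_Ω |u|^p dx on L^s(Ω). For any ū ∈ L^s(Ω), every element η of the Fréchet subdifferential of q_{s,p} at ū satisfies η = p·|ū|^{p−2}·ū almost everywhere on {ū ≠ 0}. -/
open MeasureTheory Real Filter Topology Set
open scoped ENNReal

/-! Test the Fréchet inequality with `h = τ • 𝟙_B` for measurable `B ⊆ {c ≤ |ū|}`. The function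
`F τ = ∫_B (|ū + τ|^p - |ū|^p) - τ ∫_B η` then satisfies `F τ ≥ -ε|τ|` near `0` for every `ε > 0`,
and it is differentiable at `0` by dominated convergence, because `|ū + τ| ≥ c/2` on `B` for small
`τ` and `p ≤ 1` bounds the derivative `p|ū + τ|^{p-2}(ū + τ)` by `|p| (c/2)^{p-1}`. Such a
function has zero derivative, so `∫_B η = ∫_B p|ū|^{p-2}ū` for every such `B`, hence
`η = p|ū|^{p-2}ū` a.e. on `{c ≤ |ū|}`; letting `c = 1/(n+1)` exhausts `{ū ≠ 0}`. -/

theorem hasDerivAt_abs_rpow_of_ne_zero {x : ℝ} (hx : x ≠ 0) (p : ℝ) :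
    HasDerivAt (fun y => |y| ^ p) (p * |x| ^ (p - 2) * x) x := by
  convert (hasDerivAt_abs hx).rpow_const (p := p) (Or.inl (abs_ne_zero.2 hx)) using 1
  have hsign : (SignType.sign x : ℝ) * |x| = x := sign_mul_abs x
  rw [show p - 1 = p - 2 + 1 by ring, Real.rpow_add_one (abs_ne_zero.2 hx)]
  nth_rewrite 2 [← hsign]
  ring

theorem abs_mul_abs_rpow_sub_two_mul_le {p c y : ℝ} (hp : p ≤ 1) (hc : 0 < c) (hy : c ≤ |y|) :
    |p * |y| ^ (p - 2) * y| ≤ |p| * c ^ (p - 1) := by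
  have hy0 : |y| ≠ 0 := (hc.trans_le hy).ne'
  rw [abs_mul, abs_mul, abs_of_nonneg (Real.rpow_nonneg (abs_nonneg y) _), mul_assoc,
    ← Real.rpow_add_one hy0, show p - 2 + 1 = p - 1 by ring]
  exact mul_le_mul_of_nonneg_left (Real.rpow_le_rpow_of_nonpos hc hy (by linarith)) (abs_nonneg p)

theorem HasDerivAt.eq_zero_of_forall_eventually_neg_mul_abs_le {f : ℝ → ℝ} {f' x : ℝ}
    (hf : HasDerivAt f f' x) (h : ∀ ε > 0, ∀ᶠ t in 𝓝 0, -(ε * |t|) ≤ f (x + t) - f x) :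
    f' = 0 := by
  have lower : ∀ ε > 0, -ε ≤ f' := fun ε hε => by
    refine ge_of_tendsto hf.tendsto_slope_zero_right ?_
    filter_upwards [nhdsWithin_le_nhds (h ε hε), self_mem_nhdsWithin] with t ht (htpos : 0 < t)
    rw [smul_eq_mul, le_inv_mul_iff₀ htpos]
    rw [abs_of_pos htpos] at ht
    linarith
  have upper : ∀ ε > 0, f' ≤ ε := fun ε hε => by
    refine le_of_tendsto hf.tendsto_slope_zero_left ?_
    filter_upwards [nhdsWithin_le_nhds (h ε hε), self_mem_nhdsWithin] with t ht (htneg : t < 0)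
    rw [smul_eq_mul, ← div_eq_inv_mul, div_le_iff_of_neg htneg]
    rw [abs_of_neg htneg] at ht
    linarith
  refine le_antisymm (le_of_forall_pos_le_add fun ε hε => ?_)
    (le_of_forall_pos_le_add fun ε hε => ?_)
  · simpa using upper ε hε
  · linarith [lower ε hε]

section Integrals

variable {X : Type*} [MeasurableSpace X] {μ : Measure X}

theorem integrable_and_hasDerivAt_integral_abs_add_rpow_sub [IsFiniteMeasure μ] {u : X → ℝ}
    {c p : ℝ} (hu : AEStronglyMeasurable u μ) (hc : 0 < c) (hcu : ∀ᵐ x ∂μ, c ≤ |u x|)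
    (hp : p ≤ 1) :
    Integrable (fun x => p * |u x| ^ (p - 2) * u x) μ ∧
      HasDerivAt (fun τ => ∫ x, (|u x + τ| ^ p - |u x| ^ p) ∂μ)
        (∫ x, p * |u x| ^ (p - 2) * u x ∂μ) 0 := by
  have hfar : ∀ y : ℝ, c ≤ |y| → ∀ τ ∈ Metric.ball (0 : ℝ) (c / 2), c / 2 ≤ |y + τ| := by
    intro y hy τ hτ
    rw [Metric.mem_ball, dist_zero_right, Real.norm_eq_abs] at hτ
    have := abs_add_le (y + τ) (-τ)
    rw [add_neg_cancel_right, abs_neg] at this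
    linarith
  have key := hasDerivAt_integral_of_dominated_loc_of_deriv_le
    (F := fun τ x => |u x + τ| ^ p - |u x| ^ p)
    (F' := fun τ x => p * |u x + τ| ^ (p - 2) * (u x + τ))
    (bound := fun _ => |p| * (c / 2) ^ (p - 1)) (Metric.ball_mem_nhds 0 (half_pos hc))
    (Eventually.of_forall fun τ =>
      ((by fun_prop : Measurable fun y : ℝ => |y + τ| ^ p - |y| ^ p).comp_aemeasurable
        hu.aemeasurable).aestronglyMeasurable)
    (by simp)
    ((by fun_prop : Measurable fun y : ℝ => p * |y + 0| ^ (p - 2) * (y + 0)).comp_aemeasurable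
        hu.aemeasurable).aestronglyMeasurable
    (hcu.mono fun x hx τ hτ =>
      abs_mul_abs_rpow_sub_two_mul_le hp (half_pos hc) (hfar _ hx τ hτ))
    (integrable_const _)
    (hcu.mono fun x hx τ hτ => by
      have hne : u x + τ ≠ 0 := abs_pos.1 ((half_pos hc).trans_le (hfar _ hx τ hτ))
      simpa using ((hasDerivAt_abs_rpow_of_ne_zero hne p).comp τ
        ((hasDerivAt_id τ).const_add (u x))).sub_const (|u x| ^ p))
  simpa using key

theorem integrable_abs_rpow_of_memLp [IsFiniteMeasure μ] {f : X → ℝ} {p s : ℝ} (hp : 0 < p)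
    (hps : p ≤ s) (hf : MemLp f (ENNReal.ofReal s) μ) : Integrable (fun x => |f x| ^ p) μ := by
  have := (hf.mono_exponent (ENNReal.ofReal_le_ofReal hps)).integrable_norm_rpow
    (ENNReal.ofReal_pos.2 hp).ne' ENNReal.ofReal_ne_top
  simpa [ENNReal.toReal_ofReal hp.le] using this

theorem Lnorm_indicator_const {s : ℝ} (hs : s ≠ 0) {B : Set X}
    (hB : MeasurableSet B) (τ : ℝ) :
    Lnorm μ s (B.indicator fun _ => τ) = |τ| * μ.real B ^ (1 / s) := by
  have habs : (fun x => |B.indicator (fun _ => τ) x| ^ s) = B.indicator fun _ => |τ| ^ s := by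
    funext x
    by_cases hx : x ∈ B <;> simp [hx, Real.zero_rpow hs]
  rw [Lnorm, habs, integral_indicator hB, setIntegral_const, smul_eq_mul,
    Real.mul_rpow measureReal_nonneg (Real.rpow_nonneg (abs_nonneg τ) _), one_div,
    Real.rpow_rpow_inv (abs_nonneg τ) hs, mul_comm]

theorem InFSub.congr_ae {s : ℝ} {φ : ℝ → ℝ} {u v η : X → ℝ} (huv : u =ᵐ[μ] v)
    (hsub : InFSub μ s (fun w => ∫ x, φ (w x) ∂μ) u η) :
    InFSub μ s (fun w => ∫ x, φ (w x) ∂μ) v η := by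
  intro ε hε
  obtain ⟨δ, hδ, hu⟩ := hsub ε hε
  refine ⟨δ, hδ, fun h hh hpos hle => ?_⟩
  have hshift : ∫ x, φ (u x + h x) ∂μ = ∫ x, φ (v x + h x) ∂μ :=
    integral_congr_ae (huv.mono fun x hx => by simp only [hx])
  have hbase : ∫ x, φ (u x) ∂μ = ∫ x, φ (v x) ∂μ :=
    integral_congr_ae (huv.mono fun x hx => by simp only [hx])
  simpa only [hshift, hbase] using hu h hh hpos hle

end Integrals

section FrechetSubdifferential

variable {X : Type*} [MeasurableSpace X] {μ : Measure X} [IsFiniteMeasure μ] {s p : ℝ}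
  {u η : X → ℝ}

theorem InFSub.setIntegral_eq (hp₀ : 0 < p) (hp₁ : p ≤ 1) (hps : p ≤ s)
    (hu : MemLp u (ENNReal.ofReal s) μ)
    (hsub : InFSub μ s (fun v => ∫ x, |v x| ^ p ∂μ) u η) {c : ℝ} (hc : 0 < c) {B : Set X}
    (hB : MeasurableSet B) (hBu : ∀ x ∈ B, c ≤ |u x|) :
    ∫ x in B, η x ∂μ = ∫ x in B, p * |u x| ^ (p - 2) * u x ∂μ := by
  rcases eq_or_ne (μ B) 0 with hB0 | hB0
  · simp [Measure.restrict_eq_zero.2 hB0]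
  have hs : s ≠ 0 := (hp₀.trans_le hps).ne'
  set M := μ.real B ^ (1 / s)
  have hM : 0 < M := Real.rpow_pos_of_pos (ENNReal.toReal_pos hB0 (measure_ne_top μ B)) _
  set F : ℝ → ℝ := fun τ => ∫ x in B, (|u x + τ| ^ p - |u x| ^ p) ∂μ - τ * ∫ x in B, η x ∂μ
  have hF : ∀ τ, F τ = (∫ x, |u x + B.indicator (fun _ => τ) x| ^ p ∂μ)
      - (∫ x, |u x| ^ p ∂μ) - ∫ x, η x * B.indicator (fun _ => τ) x ∂μ := by
    intro τ
    have hshift : Integrable (fun x => |u x + B.indicator (fun _ => τ) x| ^ p) μ :=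
      integrable_abs_rpow_of_memLp hp₀ hps (hu.add ((memLp_const τ).indicator hB))
    rw [← integral_sub hshift (integrable_abs_rpow_of_memLp hp₀ hps hu)]
    simp only [F]
    rw [← integral_const_mul, ← integral_indicator hB, ← integral_indicator hB]
    congr 1 <;> congr 1 <;> funext x <;> by_cases hx : x ∈ B <;> simp [hx, mul_comm]
  have hderiv : HasDerivAt F ((∫ x in B, p * |u x| ^ (p - 2) * u x ∂μ) - ∫ x in B, η x ∂μ) 0 := by
    have hcu : ∀ᵐ x ∂μ.restrict B, c ≤ |u x| := (ae_restrict_iff' hB).2 (ae_of_all _ hBu)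
    exact ((integrable_and_hasDerivAt_integral_abs_add_rpow_sub hu.1.restrict hc hcu hp₁).2.sub
      ((hasDerivAt_id (0 : ℝ)).mul_const _)).congr_deriv (by rw [one_mul])
  have hmin : ∀ ε > 0, ∀ᶠ t in 𝓝 0, -(ε * |t|) ≤ F (0 + t) - F 0 := by
    intro ε hε
    obtain ⟨δ, hδ, hquot⟩ := hsub (ε / M) (div_pos hε hM)
    filter_upwards [Metric.ball_mem_nhds (0 : ℝ) (div_pos hδ hM)] with t ht
    rcases eq_or_ne t 0 with rfl | ht0
    · simp
    rw [Metric.mem_ball, dist_zero_right, Real.norm_eq_abs, lt_div_iff₀ hM] at ht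
    have hnorm := Lnorm_indicator_const (μ := μ) hs hB t
    have := hquot _ ((memLp_const t).indicator hB) (by rw [hnorm]; positivity)
      (by rw [hnorm]; exact ht.le)
    rw [hnorm, ← hF] at this
    have hF0 : F 0 = 0 := by simp [F]
    rw [zero_add, hF0, sub_zero]
    calc -(ε * |t|) = -(ε / M) * (|t| * M) := by field_simp
      _ ≤ F t := this
  linarith [hderiv.eq_zero_of_forall_eventually_neg_mul_abs_le hmin]

theorem InFSub.ae_eq_of_ne_zero (hp₀ : 0 < p) (hp₁ : p ≤ 1) (hps : p ≤ s)
    (hu : MemLp u (ENNReal.ofReal s) μ) (hum : Measurable u) (hη : Integrable η μ)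
    (hsub : InFSub μ s (fun v => ∫ x, |v x| ^ p ∂μ) u η) :
    ∀ᵐ x ∂μ, u x ≠ 0 → η x = p * |u x| ^ (p - 2) * u x := by
  have hlevel : ∀ n : ℕ, ∀ᵐ x ∂μ, 1 / ((n : ℝ) + 1) ≤ |u x| →
      η x = p * |u x| ^ (p - 2) * u x := by
    intro n
    have hc : (0 : ℝ) < 1 / ((n : ℝ) + 1) := Nat.one_div_pos_of_nat
    set A := {x | 1 / ((n : ℝ) + 1) ≤ |u x|}
    have hA : MeasurableSet A := measurableSet_le measurable_const hum.abs
    have hgA := (integrable_and_hasDerivAt_integral_abs_add_rpow_sub hu.1.restrict hc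
      ((ae_restrict_iff' hA).2 (ae_of_all _ fun _ hx => hx)) hp₁).1
    refine (ae_restrict_iff' hA).1 <| Integrable.ae_eq_of_forall_setIntegral_eq _ _
      hη.integrableOn hgA fun t ht _ => ?_
    rw [Measure.restrict_restrict ht]
    exact hsub.setIntegral_eq hp₀ hp₁ hps hu hc (ht.inter hA) fun x hx => hx.2
  filter_upwards [ae_all_iff.2 hlevel] with x hx hux
  obtain ⟨n, hn⟩ := exists_nat_one_div_lt (abs_pos.2 hux)
  exact hx n hn.le

end FrechetSubdifferential

theorem fsub_qsp_formula_general (d : ℕ) (Ω : Set (Fin d → ℝ))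
    (hfin : volume Ω < ⊤) (s p : ℝ) (hs : 1 ≤ s)
    (hp : p ∈ Set.Ioo (0:ℝ) 1) (r : ℝ≥0∞)
    (hr : (ENNReal.ofReal s)⁻¹ + r⁻¹ = 1)
    (ubar η : (Fin d → ℝ) → ℝ)
    (hubar : MemLp ubar (ENNReal.ofReal s) (volume.restrict Ω))
    (hη : MemLp η r (volume.restrict Ω))
    (hsub : InFSub (volume.restrict Ω) s
      (fun u => ∫ x, |u x| ^ p ∂(volume.restrict Ω)) ubar η) :
    ∀ᵐ x ∂(volume.restrict Ω), ubar x ≠ 0 → η x = p * |ubar x| ^ (p - 2) * ubar x := by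
  have : IsFiniteMeasure (volume.restrict Ω) := isFiniteMeasure_restrict.2 hfin.ne
  have hr₁ : 1 ≤ r := ENNReal.inv_le_one.1 (hr ▸ le_add_self)
  -- the level sets `{c ≤ |ubar|}` must be measurable, so pass to a measurable representative
  have hmk := hubar.1.ae_eq_mk
  have hmain := InFSub.ae_eq_of_ne_zero hp.1 hp.2.le (by linarith [hp.2]) (hubar.ae_eq hmk)
    hubar.1.stronglyMeasurable_mk.measurable (hη.integrable hr₁)
    (hsub.congr_ae (φ := fun t => |t| ^ p) hmk)
  filter_upwards [hmain, hmk] with x hx hx_mk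
  rw [hx_mk]
  exact hx

/-- Every element of the Fréchet subdifferential of `q_{s,p}(u) = ∫ |u|^p` at `ubar`
equals `p·|ubar|^{p-2}·ubar` almost everywhere on `{ubar ≠ 0}`. -/
theorem fsub_qsp_formula (d : ℕ) (Ω : Set (Fin d → ℝ)) (hΩ : MeasurableSet Ω)
    (h0 : 0 < volume Ω) (hfin : volume Ω < ⊤) (s p : ℝ) (hs : 1 ≤ s)
    (hp : p ∈ Set.Ioo (0:ℝ) 1) (r : ℝ≥0∞)
    (hr : (ENNReal.ofReal s)⁻¹ + r⁻¹ = 1)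
    (ubar η : (Fin d → ℝ) → ℝ)
    (hubar : MemLp ubar (ENNReal.ofReal s) (volume.restrict Ω))
    (hη : MemLp η r (volume.restrict Ω))
    (hsub : InFSub (volume.restrict Ω) s
      (fun u => ∫ x, |u x| ^ p ∂(volume.restrict Ω)) ubar η) :
    ∀ᵐ x ∂(volume.restrict Ω), ubar x ≠ 0 → η x = p * |ubar x| ^ (p - 2) * ubar x :=
  fsub_qsp_formula_general d Ω hfin s p hs hp r hr ubar η hubar hη hsub
end
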